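/- Let (ℙ^x)_{x∈E} be a diffusion (the pushforward of ℙ^x under evaluation at time 0 is δ_x, and x ↦ ℙ^x is weakly continuous), obs : E → [0,1] continuous, and 0 < c < 1. Then for every expression f of the logic L_σ, its interpretation x ↦ f(x) is a continuous function E → [0,1], and for every expression g of the logic L_τ, its interpretation ω ↦ g(ω) is a continuous function Ω → [0,1] (with respect to the uniform-metric topology on Ω). -/

import Mathlib

open MeasureTheory Topology Filter BoundedContinuousFunction NNReal

noncomputable section

/-- A 1-bounded pseudometric on a type `X`. -/
structure IsPseudometric {X : Type*} (m : X → X → ℝ) : Prop where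
  nonneg : ∀ x y, 0 ≤ m x y
  le_one : ∀ x y, m x y ≤ 1
  refl : ∀ x, m x x = 0
  symm : ∀ x y, m x y = m y x
  triangle : ∀ x y z, m x z ≤ m x y + m y z

/-- `γ` is a coupling of `P` and `Q`. -/
def IsCoupling {X Y : Type*} [MeasurableSpace X] [MeasurableSpace Y]
    (γ : Measure (X × Y)) (P : Measure X) (Q : Measure Y) : Prop :=
  IsProbabilityMeasure γ ∧ γ.map Prod.fst = P ∧ γ.map Prod.snd = Q

/-- The optimal transport cost `W(c)(P,Q) = inf_{γ ∈ Γ(P,Q)} ∫ c dγ`. -/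
def Wc {X : Type*} [MeasurableSpace X] (c : X → X → ℝ) (P Q : Measure X) : ℝ :=
  sInf {r : ℝ | ∃ γ : Measure (X × X), IsCoupling γ P Q ∧ r = ∫ z, c z.1 z.2 ∂γ}

/-- The space of (bounded) continuous trajectories `[0,∞) → E`, with the uniform metric. -/
abbrev Traj (E : Type*) [PseudoMetricSpace E] := BoundedContinuousFunction ℝ≥0 E

instance {E : Type*} [PseudoMetricSpace E] : MeasurableSpace (Traj E) := borel _
instance {E : Type*} [PseudoMetricSpace E] : BorelSpace (Traj E) := ⟨rfl⟩

/-- The discounted uniform pseudometric `U_c(m)(ω,ω') = sup_{t ≥ 0} c^t · m(ω(t), ω'(t))`. -/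
def Udisc {E : Type*} [PseudoMetricSpace E] (c : ℝ) (m : E → E → ℝ)
    (ω ω' : Traj E) : ℝ :=
  ⨆ t : ℝ≥0, c ^ (t : ℝ) * m (ω t) (ω' t)

/-- `P_t(x)`: the pushforward of `ℙ^x` under evaluation at time `t`. -/
def kernelAt {E : Type*} [PseudoMetricSpace E] [MeasurableSpace E]
    (ℙ : E → Measure (Traj E)) (t : ℝ≥0) (x : E) : Measure E :=
  (ℙ x).map fun ω => ω t

/-- The functional `F_c(m)(x,y) = sup_{t ≥ 0} c^t W(m)(P_t(x), P_t(y))`. -/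
def Ffun {E : Type*} [PseudoMetricSpace E] [MeasurableSpace E]
    (ℙ : E → Measure (Traj E)) (c : ℝ) (m : E → E → ℝ) (x y : E) : ℝ :=
  ⨆ t : ℝ≥0, c ^ (t : ℝ) * Wc m (kernelAt ℙ t x) (kernelAt ℙ t y)

/-- The functional `G_c(m)(x,y) = W(U_c(m))(ℙ^x, ℙ^y)`. -/
def Gfun {E : Type*} [PseudoMetricSpace E] [MeasurableSpace E]
    (ℙ : E → Measure (Traj E)) (c : ℝ) (m : E → E → ℝ) (x y : E) : ℝ :=
  Wc (Udisc c m) (ℙ x) (ℙ y)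

/-- The family `x ↦ ℙ^x` is weakly continuous: if `xₙ → x` then
`∫ F dℙ^{xₙ} → ∫ F dℙ^x` for every bounded continuous `F`. -/
def WeaklyContinuousFamily {A B : Type*} [TopologicalSpace A] [TopologicalSpace B]
    [MeasurableSpace B] (ℙ : A → Measure B) : Prop :=
  ∀ (F : B →ᵇ ℝ) (x : A) (u : ℕ → A), Tendsto u atTop (nhds x) →
    Tendsto (fun n => ∫ ω, F ω ∂(ℙ (u n))) atTop (nhds (∫ ω, F ω ∂(ℙ x)))

mutual
/-- Expressions of the state logic `L_σ : f ::= q | obs | 1 − f | ∫ g`,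
with `q ∈ [0,1] ∩ ℚ`. -/
inductive Lsig : Type where
  | const : {q : ℚ // 0 ≤ q ∧ q ≤ 1} → Lsig
  | obs : Lsig
  | compl : Lsig → Lsig
  | integ : Ltau → Lsig

/-- Expressions of the trajectory logic
`L_τ : g ::= f ∘ ev_t | min{g₁,g₂} | max{g₁,g₂} | g ⊖ q | g ⊕ q`,
with `q ∈ [0,1] ∩ ℚ` and `t ∈ ℚ≥0`. -/
inductive Ltau : Type where
  | ev : Lsig → NNRat → Ltau
  | minE : Ltau → Ltau → Ltau
  | maxE : Ltau → Ltau → Ltau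
  | subQ : Ltau → {q : ℚ // 0 ≤ q ∧ q ≤ 1} → Ltau
  | addQ : Ltau → {q : ℚ // 0 ≤ q ∧ q ≤ 1} → Ltau
end

mutual
/-- Interpretation of `L_σ` expressions as functions `E → [0,1]`. -/
def semSig {E : Type*} [PseudoMetricSpace E] [MeasurableSpace E]
    (obs : E → ℝ) (ℙ : E → Measure (Traj E)) (c : ℝ) : Lsig → E → ℝ
  | .const q => fun _ => (q.1 : ℝ)
  | .obs => fun x => obs x
  | .compl f => fun x => 1 - semSig obs ℙ c f x
  | .integ g => fun x => ∫ ω, semTau obs ℙ c g ω ∂(ℙ x)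

/-- Interpretation of `L_τ` expressions as functions `Ω → [0,1]`. -/
def semTau {E : Type*} [PseudoMetricSpace E] [MeasurableSpace E]
    (obs : E → ℝ) (ℙ : E → Measure (Traj E)) (c : ℝ) : Ltau → Traj E → ℝ
  | .ev f t => fun ω => c ^ (t : ℝ) * semSig obs ℙ c f (ω (t : ℝ≥0))
  | .minE g₁ g₂ => fun ω => min (semTau obs ℙ c g₁ ω) (semTau obs ℙ c g₂ ω)
  | .maxE g₁ g₂ => fun ω => max (semTau obs ℙ c g₁ ω) (semTau obs ℙ c g₂ ω)
  | .subQ g q => fun ω => max 0 (semTau obs ℙ c g ω - (q.1 : ℝ))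
  | .addQ g q => fun ω => min 1 (semTau obs ℙ c g ω + (q.1 : ℝ))
end

section Aux

mutual

theorem keySig {E : Type*} [MetricSpace E] [PolishSpace E] [MeasurableSpace E] [BorelSpace E]
    (ℙ : E → Measure (Traj E)) (hprob : ∀ x, IsProbabilityMeasure (ℙ x))
    (hweak : WeaklyContinuousFamily ℙ)
    (obs : E → ℝ) (hobs_cont : Continuous obs) (hobs01 : ∀ x, obs x ∈ Set.Icc (0 : ℝ) 1)
    (c : ℝ) (hc0 : 0 < c) (hc1 : c < 1) : ∀ f : Lsig, Continuous (semSig obs ℙ c f) ∧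
    ∀ x, semSig obs ℙ c f x ∈ Set.Icc (0 : ℝ) 1
  | .const q => by
    constructor
    · simpa [semSig] using continuous_const
    · intro x
      simp only [semSig]
      exact ⟨by exact_mod_cast q.2.1, by exact_mod_cast q.2.2⟩
  | .obs => ⟨hobs_cont, hobs01⟩
  | .compl f => by
    obtain ⟨hcont, hbd⟩ := keySig ℙ hprob hweak obs hobs_cont hobs01 c hc0 hc1 f
    refine ⟨continuous_const.sub hcont, fun x => ?_⟩
    have := hbd x
    exact ⟨by simp only [semSig]; linarith [this.2], by simp only [semSig]; linarith [this.1]⟩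
  | .integ g => by
    obtain ⟨hcont, hbd⟩ := keyTau ℙ hprob hweak obs hobs_cont hobs01 c hc0 hc1 g
    set G := semTau obs ℙ c g with hG
    have hFbd : ∀ ω ω' : Traj E, dist (G ω) (G ω') ≤ 1 := by
      intro ω ω'
      have h1 := hbd ω; have h2 := hbd ω'
      rw [Real.dist_eq, abs_sub_le_iff]
      constructor <;> linarith [h1.1, h1.2, h2.1, h2.2]
    let F : Traj E →ᵇ ℝ := ⟨⟨G, hcont⟩, ⟨1, hFbd⟩⟩
    have hFint : ∀ x, Integrable G (ℙ x) := fun x => by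
      have := hprob x
      exact F.integrable (ℙ x)
    constructor
    · have hseq : SeqContinuous (fun x => ∫ ω, G ω ∂(ℙ x)) := by
        intro u x hux
        exact hweak F x u hux
      exact hseq.continuous
    · intro x
      have := hprob x
      constructor
      · exact integral_nonneg fun ω => (hbd ω).1
      · calc ∫ ω, G ω ∂(ℙ x) ≤ ∫ _ω, (1 : ℝ) ∂(ℙ x) :=
              integral_mono (hFint x) (integrable_const 1) fun ω => (hbd ω).2
          _ = 1 := by simp

theorem keyTau {E : Type*} [MetricSpace E] [PolishSpace E] [MeasurableSpace E] [BorelSpace E]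
    (ℙ : E → Measure (Traj E)) (hprob : ∀ x, IsProbabilityMeasure (ℙ x))
    (hweak : WeaklyContinuousFamily ℙ)
    (obs : E → ℝ) (hobs_cont : Continuous obs) (hobs01 : ∀ x, obs x ∈ Set.Icc (0 : ℝ) 1)
    (c : ℝ) (hc0 : 0 < c) (hc1 : c < 1) : ∀ g : Ltau, Continuous (semTau obs ℙ c g) ∧
    ∀ ω, semTau obs ℙ c g ω ∈ Set.Icc (0 : ℝ) 1
  | .ev f t => by
    obtain ⟨hcont, hbd⟩ := keySig ℙ hprob hweak obs hobs_cont hobs01 c hc0 hc1 f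
    have hct0 : (0 : ℝ) ≤ c ^ ((t : ℝ≥0) : ℝ) := (Real.rpow_pos_of_pos hc0 _).le
    have hct1 : c ^ ((t : ℝ≥0) : ℝ) ≤ 1 :=
      Real.rpow_le_one hc0.le hc1.le (t : ℝ≥0).coe_nonneg
    refine ⟨continuous_const.mul (hcont.comp ?_), fun ω => ?_⟩
    · exact continuous_eval_const _
    · have h := hbd (ω (t : ℝ≥0))
      exact ⟨mul_nonneg hct0 h.1, mul_le_one₀ hct1 h.1 h.2⟩
  | .minE g₁ g₂ => by
    obtain ⟨h1, b1⟩ := keyTau ℙ hprob hweak obs hobs_cont hobs01 c hc0 hc1 g₁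
    obtain ⟨h2, b2⟩ := keyTau ℙ hprob hweak obs hobs_cont hobs01 c hc0 hc1 g₂
    exact ⟨h1.min h2, fun ω => ⟨le_min (b1 ω).1 (b2 ω).1, min_le_of_left_le (b1 ω).2⟩⟩
  | .maxE g₁ g₂ => by
    obtain ⟨h1, b1⟩ := keyTau ℙ hprob hweak obs hobs_cont hobs01 c hc0 hc1 g₁
    obtain ⟨h2, b2⟩ := keyTau ℙ hprob hweak obs hobs_cont hobs01 c hc0 hc1 g₂
    exact ⟨h1.max h2, fun ω => ⟨le_max_of_le_left (b1 ω).1, max_le (b1 ω).2 (b2 ω).2⟩⟩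
  | .subQ g q => by
    obtain ⟨h1, b1⟩ := keyTau ℙ hprob hweak obs hobs_cont hobs01 c hc0 hc1 g
    refine ⟨continuous_const.max (h1.sub continuous_const), fun ω => ?_⟩
    have hq : (0 : ℝ) ≤ (q.1 : ℝ) := by exact_mod_cast q.2.1
    exact ⟨le_max_left _ _, max_le zero_le_one (by linarith [(b1 ω).2])⟩
  | .addQ g q => by
    obtain ⟨h1, b1⟩ := keyTau ℙ hprob hweak obs hobs_cont hobs01 c hc0 hc1 g
    refine ⟨continuous_const.min (h1.add continuous_const), fun ω => ?_⟩
    have hq : (0 : ℝ) ≤ (q.1 : ℝ) := by exact_mod_cast q.2.1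
    exact ⟨le_min zero_le_one (by linarith [(b1 ω).1]), min_le_left _ _⟩

end

end Aux

theorem semSig_semTau_continuous
    {E : Type*} [MetricSpace E] [PolishSpace E] [MeasurableSpace E] [BorelSpace E]
    (hΔ : ∀ x y : E, dist x y ≤ 1)
    (ℙ : E → Measure (Traj E)) (hprob : ∀ x, IsProbabilityMeasure (ℙ x))
    (hdirac : ∀ x : E, (ℙ x).map (fun ω => ω 0) = Measure.dirac x)
    (hweak : WeaklyContinuousFamily ℙ)
    (obs : E → ℝ) (hobs_cont : Continuous obs) (hobs01 : ∀ x, obs x ∈ Set.Icc (0 : ℝ) 1)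
    (c : ℝ) (hc0 : 0 < c) (hc1 : c < 1) :
    (∀ f : Lsig, Continuous (semSig obs ℙ c f)) ∧
      (∀ g : Ltau, Continuous (semTau obs ℙ c g)) :=
  ⟨fun f => (keySig ℙ hprob hweak obs hobs_cont hobs01 c hc0 hc1 f).1,
   fun g => (keyTau ℙ hprob hweak obs hobs_cont hobs01 c hc0 hc1 g).1⟩
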